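/- arXiv:2508.01406 — 2 statements merged into one kernel-verified Lean document; each statement's English description precedes it below -/
import Mathlib

section
/- For 0 < φ < β < π, the Abel sum of the series ∑_{n=0}^∞ cos((n + 1/2)β) P_n(cos φ) equals 0, i.e., lim_{r→1⁻} ∑_{n=0}^∞ r^n cos((n+1/2)β) P_n(cos φ) = 0. -/
open Filter Real

/-- The `n`-th Legendre polynomial via Rodrigues' formula. -/
noncomputable def legendreP (n : ℕ) (x : ℝ) : ℝ :=
  (1 / (2 ^ n * n.factorial)) * iteratedDeriv n (fun y : ℝ => (y ^ 2 - 1) ^ n) x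

open scoped NNReal ENNReal

namespace AbelLegendre

open Polynomial

noncomputable def Rod (n : ℕ) : ℝ[X] := derivative^[n] ((X ^ 2 - 1) ^ n)

lemma itadd (k : ℕ) (p q : ℝ[X]) :
    derivative^[k] (p + q) = derivative^[k] p + derivative^[k] q := by
  induction k generalizing p q with
  | zero => rfl
  | succ k ih =>
      rw [Function.iterate_succ_apply derivative k (p + q), Function.iterate_succ_apply derivative k p,
        Function.iterate_succ_apply derivative k q, derivative_add, ih]

lemma leibX (m : ℕ) (q : ℝ[X]) :
    derivative^[m + 1] (X * q) =
      X * derivative^[m + 1] q + ((m : ℝ[X]) + 1) * derivative^[m] q := by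
  induction m generalizing q with
  | zero => simp [derivative_mul]; ring
  | succ m ih =>
      rw [Function.iterate_succ_apply, derivative_mul, derivative_X, one_mul, itadd,
        ih (derivative q)]
      rw [← Function.iterate_succ_apply derivative (m+1), ← Function.iterate_succ_apply derivative m]
      push_cast
      ring

lemma dpow (n : ℕ) :
    derivative ((X ^ 2 - 1 : ℝ[X]) ^ (n + 1)) =
      ((2 * (n + 1) : ℕ) : ℝ[X]) * (X * (X ^ 2 - 1) ^ n) := by
  rw [derivative_pow]
  simp [C_eq_natCast, map_ofNat]
  push_cast
  ring

lemma E1 (n : ℕ) :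
    derivative (Rod (n + 1)) =
      2 * ((n : ℝ[X]) + 1) * (X * derivative (Rod n) + ((n : ℝ[X]) + 1) * Rod n) := by
  have h : derivative (Rod (n + 1)) =
      derivative^[n + 1] (derivative ((X ^ 2 - 1 : ℝ[X]) ^ (n + 1))) := by
    rw [Rod]
    rw [← Function.iterate_succ_apply derivative (n+1), ← Function.iterate_succ_apply' derivative (n+1)]
  rw [h, dpow, iterate_derivative_natCast_mul, leibX]
  have h2 : derivative^[n + 1] ((X ^ 2 - 1 : ℝ[X]) ^ n) = derivative (Rod n) := by
    rw [Rod, ← Function.iterate_succ_apply' derivative n]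
  have hR : derivative^[n] ((X ^ 2 - 1 : ℝ[X]) ^ n) = Rod n := rfl
  rw [h2, hR]
  push_cast
  ring

lemma E2 (n : ℕ) :
    X * derivative (Rod (n + 1)) + ((n : ℝ[X]) + 1) * Rod (n + 1) =
      2 * ((n : ℝ[X]) + 1) * (Rod (n + 1) + derivative (Rod n)) := by
  have base : X * derivative ((X ^ 2 - 1 : ℝ[X]) ^ (n + 1)) =
      ((2 * (n + 1) : ℕ) : ℝ[X]) * ((X ^ 2 - 1) ^ (n + 1) + (X ^ 2 - 1) ^ n) := by
    rw [dpow]; push_cast; ring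
  have happ := congrArg (derivative^[n + 1]) base
  rw [iterate_derivative_natCast_mul, itadd, leibX] at happ
  have h1 : derivative^[n + 1] (derivative ((X ^ 2 - 1 : ℝ[X]) ^ (n + 1))) =
      derivative (Rod (n + 1)) := by
    rw [Rod, ← Function.iterate_succ_apply derivative (n+1),
      ← Function.iterate_succ_apply' derivative (n+1)]
  have h2 : derivative^[n] (derivative ((X ^ 2 - 1 : ℝ[X]) ^ (n + 1))) = Rod (n + 1) := by
    rw [Rod, ← Function.iterate_succ_apply derivative n]
  have h3 : derivative^[n + 1] ((X ^ 2 - 1 : ℝ[X]) ^ n) = derivative (Rod n) := by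
    rw [Rod, ← Function.iterate_succ_apply' derivative n]
  have hV : derivative^[n + 1] ((X ^ 2 - 1 : ℝ[X]) ^ (n + 1)) = Rod (n + 1) := rfl
  rw [h1, h2, h3, hV] at happ
  rw [happ]
  push_cast
  ring

lemma eval_rec (x : ℝ) (n : ℕ) :
    ((n : ℝ) + 1) * ((n : ℝ) + 2) * (Rod (n + 2)).eval x =
      2 * (2 * (n : ℝ) + 3) * ((n : ℝ) + 1) * ((n : ℝ) + 2) * (x * (Rod (n + 1)).eval x)
        - 4 * ((n : ℝ) + 1) ^ 3 * ((n : ℝ) + 2) * (Rod n).eval x := by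
  have h1 := congrArg (eval x) (E1 n)
  have h2 := congrArg (eval x) (E2 n)
  have h3 := congrArg (eval x) (E1 (n + 1))
  have h4 := congrArg (eval x) (E2 (n + 1))
  simp only [eval_mul, eval_add, eval_X, eval_natCast, eval_pow, eval_ofNat, Nat.cast_add,
    Nat.cast_one, eval_one] at h1 h2 h3 h4
  push_cast at h1 h2 h3 h4 ⊢
  linear_combination (-2*((n:ℝ)+2)*((n:ℝ)+1)) * h1 + (2*((n:ℝ)+2)*((n:ℝ)+1)*x) * h2
    + (((n:ℝ)+1)*x) * h3 + (-((n:ℝ)+1)) * h4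

lemma iteratedDeriv_eval (p : ℝ[X]) (m : ℕ) :
    iteratedDeriv m (fun y : ℝ => p.eval y) = fun y => (derivative^[m] p).eval y := by
  induction m with
  | zero => simp
  | succ m ih =>
      rw [iteratedDeriv_succ, ih, Function.iterate_succ_apply']
      funext y
      exact Polynomial.deriv _

lemma legendreP_eq (n : ℕ) (x : ℝ) :
    legendreP n x = (1 / (2 ^ n * n.factorial : ℝ)) * (Rod n).eval x := by
  unfold legendreP Rod
  congr 1
  have : (fun y : ℝ => (y ^ 2 - 1) ^ n) = fun y : ℝ => (((X : ℝ[X]) ^ 2 - 1) ^ n).eval y := by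
    funext y; simp
  rw [this, iteratedDeriv_eval]

lemma legendreP_zero (x : ℝ) : legendreP 0 x = 1 := by
  rw [legendreP_eq]
  simp [Rod]

lemma legendreP_one (x : ℝ) : legendreP 1 x = x := by
  rw [legendreP_eq]
  have : Rod 1 = derivative ((X ^ 2 - 1 : ℝ[X]) ^ (0 + 1)) := rfl
  rw [this, dpow]
  simp

lemma legendreP_rec (x : ℝ) (n : ℕ) :
    ((n : ℝ) + 2) * legendreP (n + 2) x =
      (2 * (n : ℝ) + 3) * x * legendreP (n + 1) x - ((n : ℝ) + 1) * legendreP n x := by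
  have h := eval_rec x n
  rw [legendreP_eq, legendreP_eq, legendreP_eq]
  have hn1 : ((n + 1).factorial : ℝ) = ((n : ℝ) + 1) * (n.factorial : ℝ) := by
    rw [Nat.factorial_succ]; push_cast; ring
  have hn2 : ((n + 2).factorial : ℝ) = ((n : ℝ) + 2) * ((n : ℝ) + 1) * (n.factorial : ℝ) := by
    rw [Nat.factorial_succ, Nat.factorial_succ]; push_cast; ring
  have hf : (n.factorial : ℝ) ≠ 0 := Nat.cast_ne_zero.mpr n.factorial_ne_zero
  have h1 : ((n : ℝ) + 1) ≠ 0 := by positivity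
  have h2 : ((n : ℝ) + 2) ≠ 0 := by positivity
  have hp : (2 : ℝ) ^ n ≠ 0 := by positivity
  have key : (Rod (n + 2)).eval x =
      2 * (2 * (n : ℝ) + 3) * (x * (Rod (n + 1)).eval x) - 4 * ((n : ℝ) + 1) ^ 2 * (Rod n).eval x := by
    apply mul_left_cancel₀ (show ((n : ℝ) + 1) * ((n : ℝ) + 2) ≠ 0 by positivity)
    linear_combination h
  rw [key, hn1, hn2, pow_succ, pow_succ]
  field_simp
  ring

lemma legendreP_bound (x : ℝ) (hx : |x| ≤ 1) (n : ℕ) : |legendreP n x| ≤ 3 ^ n := by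
  have key : ∀ m : ℕ, |legendreP m x| ≤ 3 ^ m ∧ |legendreP (m + 1) x| ≤ 3 ^ (m + 1) := by
    intro m
    induction m with
    | zero =>
        constructor
        · rw [legendreP_zero]; norm_num
        · rw [legendreP_one]; simpa using hx.trans (by norm_num)
    | succ m ih =>
        refine ⟨ih.2, ?_⟩
        have hrec := legendreP_rec x m
        have hm2 : (0 : ℝ) < (m : ℝ) + 2 := by positivity
        have habs : ((m : ℝ) + 2) * |legendreP (m + 2) x| ≤
            (2 * (m : ℝ) + 3) * |legendreP (m + 1) x| + ((m : ℝ) + 1) * |legendreP m x| := by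
          calc ((m : ℝ) + 2) * |legendreP (m + 2) x|
              = |((m : ℝ) + 2) * legendreP (m + 2) x| := by
                rw [abs_mul, abs_of_pos hm2]
            _ = |(2 * (m : ℝ) + 3) * x * legendreP (m + 1) x - ((m : ℝ) + 1) * legendreP m x| := by
                rw [hrec]
            _ ≤ |(2 * (m : ℝ) + 3) * x * legendreP (m + 1) x| + |((m : ℝ) + 1) * legendreP m x| :=
                abs_sub _ _
            _ ≤ (2 * (m : ℝ) + 3) * |legendreP (m + 1) x| + ((m : ℝ) + 1) * |legendreP m x| := by
                rw [abs_mul, abs_mul, abs_mul]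
                have h1 : |(2 * (m : ℝ) + 3)| = 2 * (m : ℝ) + 3 := abs_of_pos (by positivity)
                have h2 : |((m : ℝ) + 1)| = (m : ℝ) + 1 := abs_of_pos (by positivity)
                rw [h1, h2]
                have hxx : (2 * (m : ℝ) + 3) * |x| * |legendreP (m + 1) x| ≤
                    (2 * (m : ℝ) + 3) * 1 * |legendreP (m + 1) x| := by
                  gcongr
                linarith
        have h3 : (0:ℝ) < 3 ^ (m+1) := by positivity
        have h3' : (0:ℝ) < 3 ^ m := by positivity
        have := ih.1; have := ih.2
        rw [show m + 1 + 1 = m + 2 from rfl]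
        rw [← mul_le_mul_iff_right₀ hm2]
        calc ((m : ℝ) + 2) * |legendreP (m + 2) x| ≤
            (2 * (m : ℝ) + 3) * |legendreP (m + 1) x| + ((m : ℝ) + 1) * |legendreP m x| := habs
          _ ≤ (2 * (m : ℝ) + 3) * 3 ^ (m + 1) + ((m : ℝ) + 1) * 3 ^ m := by
              gcongr <;> first | exact ih.1 | exact ih.2 | linarith
          _ ≤ ((m : ℝ) + 2) * 3 ^ (m + 2) := by
              have e1 : (3:ℝ) ^ (m + 1) = 3 * 3 ^ m := by rw [pow_succ]; ring
              have e2 : (3:ℝ) ^ (m + 2) = 9 * 3 ^ m := by rw [pow_succ, pow_succ]; ring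
              rw [e1, e2]
              nlinarith [h3']
  exact (key n).1


noncomputable def gseq (x : ℝ) : ℕ → ℂ := fun n => (legendreP n x : ℂ)

noncomputable def qser (x : ℝ) : FormalMultilinearSeries ℂ ℂ ℂ :=
  FormalMultilinearSeries.ofScalars ℂ (gseq x)

noncomputable def Gfun (x : ℝ) : ℂ → ℂ := (qser x).sum

noncomputable def Qp (x : ℝ) : ℂ → ℂ := fun z => 1 - 2 * (x : ℂ) * z + z ^ 2

lemma gseq_norm_le (x : ℝ) (hx : |x| ≤ 1) (n : ℕ) : ‖gseq x n‖ ≤ 3 ^ n := by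
  simpa [gseq, Complex.norm_real] using legendreP_bound x hx n

lemma radius_ge (x : ℝ) (hx : |x| ≤ 1) : ((1/4 : ℝ≥0) : ℝ≥0∞) ≤ (qser x).radius := by
  apply FormalMultilinearSeries.le_radius_of_bound _ 1
  intro n
  rw [qser, FormalMultilinearSeries.ofScalars_norm]
  have hc : ((1/4 : ℝ≥0) : ℝ) = (1/4 : ℝ) := by norm_num
  rw [hc]
  have h1 : ‖gseq x n‖ * (1/4 : ℝ) ^ n ≤ 3 ^ n * (1/4 : ℝ) ^ n := by
    gcongr
    exact gseq_norm_le x hx n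
  refine h1.trans ?_
  rw [← mul_pow]
  apply pow_le_one₀ <;> norm_num

lemma hqG (x : ℝ) (hx : |x| ≤ 1) :
    HasFPowerSeriesOnBall (Gfun x) (qser x) 0 ((1/4 : ℝ≥0) : ℝ≥0∞) := by
  have h4 : (0 : ℝ≥0∞) < ((1/4 : ℝ≥0) : ℝ≥0∞) := by norm_num
  exact ((qser x).hasFPowerSeriesOnBall (lt_of_lt_of_le h4 (radius_ge x hx))).mono h4
    (radius_ge x hx)

lemma mem_ball_of_norm {z : ℂ} (hz : ‖z‖ < ((1/4 : ℝ≥0) : ℝ)) :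
    z ∈ Metric.eball (0 : ℂ) ((1/4 : ℝ≥0) : ℝ≥0∞) := by
  rw [Metric.mem_eball, edist_zero_right]
  exact ENNReal.coe_lt_coe.mpr (by exact_mod_cast hz)

lemma hGsum (x : ℝ) (hx : |x| ≤ 1) {z : ℂ} (hz : ‖z‖ < 1/4) :
    HasSum (fun n => gseq x n * z ^ n) (Gfun x z) := by
  have := (hqG x hx).hasSum (mem_ball_of_norm (by exact_mod_cast hz))
  rw [zero_add] at this
  convert this using 2 with n
  · rfl
  rw [qser, FormalMultilinearSeries.ofScalars_apply_eq]
  rw [smul_eq_mul]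

lemma hGcoeff0 (x : ℝ) (hx : |x| ≤ 1) : Gfun x 0 = 1 := by
  have := (hGsum x hx (z := 0) (by norm_num)).tsum_eq
  rw [← this, tsum_eq_single 0 (by intro n hn; simp [zero_pow hn])]
  simp [gseq, legendreP_zero]

lemma hGderivAt (x : ℝ) (hx : |x| ≤ 1) {z : ℂ}
    (hz : z ∈ Metric.eball (0 : ℂ) ((1/4 : ℝ≥0) : ℝ≥0∞)) :
    HasSum (fun n : ℕ => ((n : ℂ) + 1) * gseq x (n + 1) * z ^ (n + 1)) (z * deriv (Gfun x) z) := by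
  have hd := (hqG x hx).fderiv
  have hs := hd.hasSum hz
  rw [zero_add] at hs
  have hs2 := (ContinuousLinearMap.apply ℂ ℂ z).hasSum hs
  have heq : ∀ n, (ContinuousLinearMap.apply ℂ ℂ z) ((qser x).derivSeries n (fun _ => z)) =
      ((n : ℂ) + 1) * gseq x (n + 1) * z ^ (n + 1) := by
    intro n
    rw [ContinuousLinearMap.apply_apply, FormalMultilinearSeries.derivSeries_apply_diag]
    rw [qser, FormalMultilinearSeries.ofScalars_apply_eq]
    push_cast [nsmul_eq_mul, smul_eq_mul]
    ring
  have hval : (ContinuousLinearMap.apply ℂ ℂ z) (fderiv ℂ (Gfun x) z) = z * deriv (Gfun x) z := by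
    rw [ContinuousLinearMap.apply_apply]
    have : fderiv ℂ (Gfun x) z z = fderiv ℂ (Gfun x) z (z • 1) := by rw [smul_eq_mul, mul_one]
    rw [this, (fderiv ℂ (Gfun x) z).map_smul, smul_eq_mul, fderiv_apply_one_eq_deriv]
  rwa [funext heq, hval] at hs2

lemma hasSum_shift (k : ℕ) {f : ℕ → ℂ} {S : ℂ} (h : HasSum f S) :
    HasSum (fun n => if k ≤ n then f (n - k) else 0) S := by
  refine (hasSum_nat_add_iff' k).mp ?_
  have e2 : (∑ i ∈ Finset.range k, if k ≤ i then f (i - k) else 0) = 0 := by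
    apply Finset.sum_eq_zero
    intro i hi
    rw [if_neg (Nat.not_le.mpr (Finset.mem_range.mp hi))]
  rw [e2, sub_zero]
  have e1 : (fun n => if k ≤ n + k then f (n + k - k) else 0) = f := by
    funext n; simp
  rw [e1]
  exact h

lemma hv_sum (x : ℝ) (hx : |x| ≤ 1) {z : ℂ} (hz : ‖z‖ < 1/4) :
    HasSum (fun n : ℕ => (n : ℂ) * gseq x n * z ^ n) (z * deriv (Gfun x) z) := by
  have hzE : z ∈ Metric.eball (0 : ℂ) ((1/4 : ℝ≥0) : ℝ≥0∞) :=
    mem_ball_of_norm (by exact_mod_cast hz)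
  have h1 := hGderivAt x hx hzE
  refine (hasSum_nat_add_iff' 1).mp ?_
  simp only [Finset.range_one, Finset.sum_singleton, Nat.cast_zero, zero_mul, sub_zero]
  convert h1 using 2 with n
  · rfl
  push_cast
  ring

lemma ode (x : ℝ) (hx : |x| ≤ 1) {z : ℂ} (hz : ‖z‖ < 1/4) :
    z * (Qp x z * deriv (Gfun x) z - ((x : ℂ) - z) * Gfun x z) = 0 := by
  have hu := hGsum x hx hz
  have hv := hv_sum x hx hz
  have A2 := hasSum_shift 1 (hv.mul_left (-2 * (x : ℂ) * z))
  have A3 := hasSum_shift 2 (hv.mul_left (z ^ 2))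
  have A4 := hasSum_shift 1 (hu.mul_left ((x : ℂ) * z))
  have A5 := hasSum_shift 2 (hu.mul_left (z ^ 2))
  have Total := ((((hv.add A2).add A3).sub A4).add A5)
  have hterms : ∀ n : ℕ,
      ((n : ℂ) * gseq x n * z ^ n +
        (if 1 ≤ n then -2 * (x : ℂ) * z * ((↑(n - 1) : ℂ) * gseq x (n - 1) * z ^ (n - 1)) else 0) +
        (if 2 ≤ n then z ^ 2 * ((↑(n - 2) : ℂ) * gseq x (n - 2) * z ^ (n - 2)) else 0) -
        (if 1 ≤ n then (x : ℂ) * z * (gseq x (n - 1) * z ^ (n - 1)) else 0) +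
        (if 2 ≤ n then z ^ 2 * (gseq x (n - 2) * z ^ (n - 2)) else 0)) = 0 := by
    intro n
    match n with
    | 0 => simp
    | 1 =>
        simp only [le_refl, if_pos, if_neg (by norm_num : ¬ (2:ℕ) ≤ 1)]
        norm_num [gseq, legendreP_zero, legendreP_one]
    | (m + 2) =>
        have h1 : (1:ℕ) ≤ m + 2 := by omega
        have h2 : (2:ℕ) ≤ m + 2 := by omega
        rw [if_pos h1, if_pos h2, if_pos h1, if_pos h2]
        have e1 : m + 2 - 1 = m + 1 := rfl
        have e2 : m + 2 - 2 = m := rfl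
        rw [e1, e2]
        have hrec := legendreP_rec x m
        have hrecC : ((m : ℂ) + 2) * gseq x (m + 2) =
            (2 * (m : ℂ) + 3) * (x : ℂ) * gseq x (m + 1) - ((m : ℂ) + 1) * gseq x m := by
          simp only [gseq]
          exact_mod_cast congrArg (fun t : ℝ => (t : ℂ)) hrec
        have hzp : (z : ℂ) ^ (m + 2) = z ^ m * z ^ 2 := by ring
        push_cast
        linear_combination (z : ℂ) ^ (m + 2) * hrecC
  have hzero : HasSum (fun _ : ℕ => (0 : ℂ)) (z * deriv (Gfun x) z + -2 * (x : ℂ) * z * (z * deriv (Gfun x) z) +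
      z ^ 2 * (z * deriv (Gfun x) z) - (x : ℂ) * z * Gfun x z + z ^ 2 * Gfun x z) := by
    convert Total using 1
    · rfl
    funext n
    exact (hterms n).symm
  have := hasSum_zero.unique hzero
  rw [Qp]
  linear_combination -this

lemma derivG_zero (x : ℝ) (hx : |x| ≤ 1) : deriv (Gfun x) 0 = (x : ℂ) := by
  have := (hqG x hx).hasFPowerSeriesAt.deriv
  rw [this, qser, FormalMultilinearSeries.ofScalars_apply_eq]
  simp [gseq, legendreP_one]

lemma QG_sq (x : ℝ) (hx : |x| ≤ 1) {z : ℂ} (hz : z ∈ Metric.ball (0 : ℂ) (1/4 : ℝ)) :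
    Qp x z * (Gfun x z) ^ 2 = 1 := by
  have hball : Metric.eball (0 : ℂ) ((1/4 : ℝ≥0) : ℝ≥0∞) = Metric.ball (0 : ℂ) (1/4 : ℝ) := by
    rw [Metric.emetric_ball_nnreal]
    norm_num
  set s := Metric.ball (0 : ℂ) (1/4 : ℝ) with hs
  have hopen : IsOpen s := Metric.isOpen_ball
  have hGdiff : DifferentiableOn ℂ (Gfun x) s := by
    rw [← hball]
    exact (hqG x hx).differentiableOn
  have hGderiv : ∀ w ∈ s, HasDerivAt (Gfun x) (deriv (Gfun x) w) w := by
    intro w hw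
    exact (hGdiff.differentiableAt (hopen.mem_nhds hw)).hasDerivAt
  have hQderiv : ∀ w : ℂ, HasDerivAt (Qp x) (-(2 * (x : ℂ)) + 2 * w) w := by
    intro w
    have h1 : HasDerivAt (fun z : ℂ => 1 - 2 * (x : ℂ) * z + z ^ 2)
        (0 - 2 * (x : ℂ) * 1 + 2 * w) w := by
      exact (((hasDerivAt_const w (1:ℂ)).sub ((hasDerivAt_id w).const_mul (2 * (x:ℂ)))).add
        (by simpa using hasDerivAt_pow 2 w))
    convert h1 using 1
    · rfl
    ring
  set h := fun w => Qp x w * (Gfun x w) ^ 2 with hdef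
  have hhd : ∀ w ∈ s, HasDerivAt h
      ((-(2 * (x : ℂ)) + 2 * w) * (Gfun x w) ^ 2 +
        Qp x w * (2 * Gfun x w ^ 1 * deriv (Gfun x) w)) w := by
    intro w hw
    exact (hQderiv w).mul ((hGderiv w hw).pow 2)
  have hderiv0 : ∀ w ∈ s, HasDerivAt h 0 w := by
    intro w hw
    have hw4 : ‖w‖ < 1/4 := by
      rw [hs, Metric.mem_ball, dist_zero_right] at hw
      exact hw
    by_cases hw0 : w = 0
    · subst hw0
      have := hhd 0 (Metric.mem_ball_self (by norm_num : (0:ℝ) < 1/4))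
      convert this using 1
      rw [derivG_zero x hx, hGcoeff0 x hx]
      simp [Qp]
    · have hode := ode x hx hw4
      have hfac : Qp x w * deriv (Gfun x) w = ((x : ℂ) - w) * Gfun x w := by
        rcases mul_eq_zero.mp hode with h' | h'
        · exact absurd h' hw0
        · linear_combination h' 
      have := hhd w hw
      convert this using 1
      rw [pow_one]
      linear_combination -2 * Gfun x w * hfac
  have hconst : ∀ w ∈ s, h w = h 0 := by
    intro w hw
    have hconv : Convex ℝ s := convex_ball 0 _
    have hdiff : DifferentiableOn ℂ h s := by
      intro w hw
      exact ((hderiv0 w hw).differentiableAt.differentiableWithinAt)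
    refine hconv.is_const_of_fderivWithin_eq_zero hdiff ?_ hw
      (Metric.mem_ball_self (by norm_num))
    intro w hw
    rw [fderivWithin_of_isOpen hopen hw]
    have hf := (hderiv0 w hw).hasFDerivAt.fderiv
    rw [hf]
    ext1
    simp
  have h0 : h 0 = 1 := by
    rw [hdef]
    simp only [hGcoeff0 x hx, Qp]
    norm_num
  have := hconst z hz
  rw [h0] at this
  exact this

noncomputable def Ffun (e : ℂ) : ℂ → ℂ :=
  fun z => (1 - z * e) ^ (-(1/2) : ℂ) * (1 - z * e⁻¹) ^ (-(1/2) : ℂ)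

lemma re_pos_aux {w : ℂ} (hw : ‖w‖ < 1) : 0 < (1 - w).re := by
  have h1 : w.re ≤ ‖w‖ := (Complex.re_le_norm w)
  simp only [Complex.sub_re, Complex.one_re]
  linarith

lemma ne_zero_of_re_pos {w : ℂ} (hw : 0 < w.re) : w ≠ 0 := by
  intro h
  rw [h] at hw
  simp at hw

section Glue

lemma e_ne_zero (e : ℂ) (he : ‖e‖ = 1) : e ≠ 0 := by
  intro h
  rw [h] at he
  simp at he

lemma einv_norm (e : ℂ) (he : ‖e‖ = 1) : ‖e⁻¹‖ = 1 := by rw [norm_inv, he]; norm_num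

lemma factor1_re_pos (e : ℂ) (he : ‖e‖ = 1) {z : ℂ} (hz : ‖z‖ < 1) : 0 < (1 - z * e).re := by
  apply re_pos_aux
  rw [norm_mul, he, mul_one]
  exact hz

lemma factor2_re_pos (e : ℂ) (he : ‖e‖ = 1) {z : ℂ} (hz : ‖z‖ < 1) : 0 < (1 - z * e⁻¹).re := by
  apply re_pos_aux
  rw [norm_mul, einv_norm e he, mul_one]
  exact hz

lemma Qfactor (x : ℝ) (e : ℂ) (he : ‖e‖ = 1) (hee : e + e⁻¹ = 2 * (x : ℂ)) (z : ℂ) : Qp x z = (1 - z * e) * (1 - z * e⁻¹) := by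
  have he0 : e * e⁻¹ = 1 := mul_inv_cancel₀ (e_ne_zero e he)
  rw [Qp]
  linear_combination z * hee - z ^ 2 * he0

lemma cpow_half_sq {w : ℂ} (hw : w ≠ 0) :
    (w ^ (-(1/2) : ℂ)) ^ 2 = w⁻¹ := by
  have h : (-(1/2) : ℂ) + (-(1/2)) = -1 := by norm_num
  rw [sq, ← Complex.cpow_add _ _ hw, h, Complex.cpow_neg_one]

lemma Fsq (e : ℂ) {z : ℂ} (h1 : (1 - z * e) ≠ 0) (h2 : (1 - z * e⁻¹) ≠ 0) :
    (Ffun e z) ^ 2 = ((1 - z * e) * (1 - z * e⁻¹))⁻¹ := by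
  rw [Ffun, mul_pow, cpow_half_sq h1, cpow_half_sq h2, mul_inv]

lemma F_zero (e : ℂ) : Ffun e 0 = 1 := by
  simp [Ffun]

lemma F_contAt (e : ℂ) (he : ‖e‖ = 1) {z : ℂ} (hz : ‖z‖ < 1) : ContinuousAt (Ffun e) z := by
  have hb1 : ContinuousAt (fun z : ℂ => 1 - z * e) z := by fun_prop
  have hb2 : ContinuousAt (fun z : ℂ => 1 - z * e⁻¹) z := by fun_prop
  exact (hb1.cpow continuousAt_const (Or.inl (factor1_re_pos e he hz))).mul
    (hb2.cpow continuousAt_const (Or.inl (factor2_re_pos e he hz)))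

lemma F_diffAt (e : ℂ) (he : ‖e‖ = 1) {z : ℂ} (hz : ‖z‖ < 1) : DifferentiableAt ℂ (Ffun e) z := by
  have hb1 : HasDerivAt (fun z : ℂ => 1 - z * e) (-e) z := by
    simpa using ((hasDerivAt_id z).mul_const e).const_sub 1
  have hb2 : HasDerivAt (fun z : ℂ => 1 - z * e⁻¹) (-e⁻¹) z := by
    simpa using ((hasDerivAt_id z).mul_const e⁻¹).const_sub 1
  exact ((hb1.cpow_const (Or.inl (factor1_re_pos e he hz))).differentiableAt).mul
    ((hb2.cpow_const (Or.inl (factor2_re_pos e he hz))).differentiableAt)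

lemma FG_eq (x : ℝ) (e : ℂ) (hx : |x| ≤ 1) (he : ‖e‖ = 1) (hee : e + e⁻¹ = 2 * (x : ℂ)) :
    ∀ z ∈ Metric.ball (0 : ℂ) (1/4 : ℝ), Ffun e z = Gfun x z := by
  set s := Metric.ball (0 : ℂ) (1/4 : ℝ) with hs
  have hnorm : ∀ z ∈ s, ‖z‖ < 1 := by
    intro z hz
    rw [hs, Metric.mem_ball, dist_zero_right] at hz
    linarith
  have hQne : ∀ z ∈ s, Qp x z ≠ 0 := by
    intro z hz
    rw [Qfactor x e he hee]
    exact mul_ne_zero (ne_zero_of_re_pos (factor1_re_pos e he (hnorm z hz)))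
      (ne_zero_of_re_pos (factor2_re_pos e he (hnorm z hz)))
  set B := fun z => Ffun e z * (Gfun x z * Qp x z) with hB
  have hBsq : ∀ z ∈ s, (B z) ^ 2 = 1 := by
    intro z hz
    have h1 := ne_zero_of_re_pos (factor1_re_pos e he (hnorm z hz))
    have h2 := ne_zero_of_re_pos (factor2_re_pos e he (hnorm z hz))
    have hF := Fsq e (z := z) h1 h2
    have hQG := QG_sq x hx (z := z) hz
    have hQf := Qfactor x e he hee z
    have hQn := hQne z hz
    rw [hB]
    have expand : (Ffun e z * (Gfun x z * Qp x z)) ^ 2 =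
        (Ffun e z) ^ 2 * (Qp x z * (Gfun x z)^2) * Qp x z := by ring
    rw [expand, hF, hQG, ← hQf]
    field_simp
  have hBcont : ContinuousOn B s := by
    intro z hz
    apply ContinuousAt.continuousWithinAt
    refine ((F_contAt e he (hnorm z hz)).mul (ContinuousAt.mul ?_ ?_))
    · have : Metric.eball (0:ℂ) ((1/4 : ℝ≥0) : ℝ≥0∞) = s := by
        rw [Metric.emetric_ball_nnreal]; norm_num; rfl
      have hcont := (hqG x hx).continuousOn
      rw [this] at hcont
      exact hcont.continuousAt (Metric.isOpen_ball.mem_nhds hz)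
    · unfold Qp
      fun_prop
  have hB0 : B 0 = 1 := by
    rw [hB]
    simp only [F_zero, hGcoeff0 x hx]
    simp [Qp]
  have h0s : (0 : ℂ) ∈ s := Metric.mem_ball_self (by norm_num)
  have hconn : IsPreconnected s := (convex_ball (0:ℂ) (1/4:ℝ)).isPreconnected
  haveI : PreconnectedSpace s := Subtype.preconnectedSpace hconn
  have hT : Continuous (fun y : s => B y) := hBcont.restrict
  have hclopen : IsClopen {y : s | B y = 1} := by
    constructor
    · have : {y : s | B y = 1} = (fun y : s => B y) ⁻¹' {1} := rfl
      rw [this]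
      exact (isClosed_singleton).preimage hT
    · have heq : {y : s | B y = 1} = (fun y : s => B y) ⁻¹' {w : ℂ | 0 < w.re} := by
        ext y
        constructor
        · intro hy
          simp only [Set.mem_setOf_eq] at hy ⊢
          simp only [Set.mem_preimage, hy, Set.mem_setOf_eq]
          norm_num
        · intro hy
          simp only [Set.mem_preimage, Set.mem_setOf_eq] at hy
          simp only [Set.mem_setOf_eq]
          have hsq := hBsq y.1 y.2
          have : (B y.1 - 1) * (B y.1 + 1) = 0 := by linear_combination hsq
          rcases mul_eq_zero.mp this with h' | h'
          · linear_combination h'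
          · exfalso
            have : B y.1 = -1 := by linear_combination h'
            rw [this] at hy
            norm_num at hy
      rw [heq]
      exact (isOpen_lt continuous_const Complex.continuous_re).preimage hT
  have huniv : {y : s | B y.1 = 1} = Set.univ := by
    rcases isClopen_iff.mp hclopen with h | h
    · exfalso
      have hmem : (⟨0, h0s⟩ : s) ∈ {y : s | B y.1 = 1} := by
        simp only [Set.mem_setOf_eq]
        exact hB0
      rw [h] at hmem
      exact hmem
    · exact h
  intro z hz
  have hz1 : B z = 1 := by
    have hmem : (⟨z, hz⟩ : s) ∈ {y : s | B y.1 = 1} := by rw [huniv]; trivial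
    exact hmem
  have hQG := QG_sq x hx (z := z) hz
  rw [hB] at hz1
  linear_combination (Gfun x z) * hz1 - (Ffun e z) * hQG

lemma main_sum (x : ℝ) (e : ℂ) (hx : |x| ≤ 1) (he : ‖e‖ = 1) (hee : e + e⁻¹ = 2 * (x : ℂ))
    {z : ℂ} (hz : ‖z‖ < 1) :
    HasSum (fun n => gseq x n * z ^ n) (Ffun e z) := by
  have hz0 : (0:ℝ) ≤ ‖z‖ := norm_nonneg z
  set Rr : ℝ := (‖z‖ + 1)/2 with hRr
  have hR1 : Rr < 1 := by rw [hRr]; linarith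
  have hRz : ‖z‖ < Rr := by rw [hRr]; linarith
  have hRpos : 0 < Rr := by rw [hRr]; linarith
  set R : ℝ≥0 := Rr.toNNReal with hRdef
  have hRcoe : (R : ℝ) = Rr := Real.coe_toNNReal _ (le_of_lt hRpos)
  have hdiff : DifferentiableOn ℂ (Ffun e) (Metric.closedBall 0 (R:ℝ)) := by
    intro w hw
    rw [Metric.mem_closedBall, dist_zero_right] at hw
    have : ‖w‖ < 1 := lt_of_le_of_lt hw (by rw [hRcoe]; exact hR1)
    exact (F_diffAt e he this).differentiableWithinAt
  have hRpos' : 0 < R := by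
    rw [← NNReal.coe_lt_coe, hRcoe]
    exact hRpos
  have hF1 := hdiff.hasFPowerSeriesOnBall hRpos'
  have hFat := hF1.hasFPowerSeriesAt
  have hGat : HasFPowerSeriesAt (Gfun x) (qser x) 0 := (hqG x hx).hasFPowerSeriesAt
  have hFG : (Gfun x) =ᶠ[nhds (0:ℂ)] (Ffun e) := by
    filter_upwards [Metric.ball_mem_nhds (0:ℂ) (by norm_num : (0:ℝ) < 1/4)] with w hw
    exact (FG_eq x e hx he hee w hw).symm
  have hGat' : HasFPowerSeriesAt (Ffun e) (qser x) 0 := hGat.congr hFG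
  have hpq : cauchyPowerSeries (Ffun e) 0 R = qser x :=
    hFat.eq_formalMultilinearSeries hGat'
  rw [hpq] at hF1
  have hmem : z ∈ Metric.eball (0:ℂ) (R : ℝ≥0∞) := by
    rw [Metric.mem_eball, edist_zero_right]
    refine ENNReal.coe_lt_coe.mpr ?_
    rw [← NNReal.coe_lt_coe, hRcoe, coe_nnnorm]
    exact hRz
  have hsum := hF1.hasSum hmem
  rw [zero_add] at hsum
  convert hsum using 2 with n
  · rfl
  rw [qser, FormalMultilinearSeries.ofScalars_apply_eq, smul_eq_mul]

end Glue

section Final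

lemma exp_I_norm (t : ℝ) : ‖Complex.exp ((t : ℂ) * Complex.I)‖ = 1 := by
  simpa using Complex.abs_exp_ofReal_mul_I t

lemma exp_I_mul (s t : ℝ) :
    Complex.exp ((s : ℂ) * Complex.I) * Complex.exp ((t : ℂ) * Complex.I) =
      Complex.exp (((s + t : ℝ) : ℂ) * Complex.I) := by
  rw [← Complex.exp_add]
  push_cast
  ring_nf

lemma exp_I_inv (t : ℝ) :
    (Complex.exp ((t : ℂ) * Complex.I))⁻¹ = Complex.exp (((-t : ℝ) : ℂ) * Complex.I) := by
  rw [← Complex.exp_neg]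
  push_cast
  ring_nf

lemma exp_I_add_inv (t : ℝ) :
    Complex.exp ((t : ℂ) * Complex.I) + (Complex.exp ((t : ℂ) * Complex.I))⁻¹ =
      2 * ((Real.cos t : ℝ) : ℂ) := by
  rw [exp_I_inv, Complex.exp_mul_I, Complex.exp_mul_I]
  push_cast
  rw [Complex.cos_neg, Complex.sin_neg]
  ring

lemma one_sub_exp_re_pos {θ : ℝ} (h0 : 0 < θ) (h2 : θ < 2 * π) :
    0 < (1 - Complex.exp ((θ : ℂ) * Complex.I)).re := by
  rw [Complex.sub_re, Complex.one_re, Complex.exp_ofReal_mul_I_re]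
  have hcos : Real.cos θ < 1 := by
    have hs : 0 < Real.sin (θ / 2) :=
      Real.sin_pos_of_pos_of_lt_pi (by linarith) (by linarith)
    have h1 := Real.sin_sq_add_cos_sq (θ / 2)
    have h2' := Real.cos_two_mul (θ / 2)
    rw [show 2 * (θ / 2) = θ by ring] at h2'
    nlinarith
  linarith

lemma F_contAt' (e : ℂ) {z : ℂ} (h1 : 0 < (1 - z * e).re) (h2 : 0 < (1 - z * e⁻¹).re) :
    ContinuousAt (Ffun e) z := by
  have hb1 : ContinuousAt (fun z : ℂ => 1 - z * e) z := by fun_prop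
  have hb2 : ContinuousAt (fun z : ℂ => 1 - z * e⁻¹) z := by fun_prop
  exact (hb1.cpow continuousAt_const (Or.inl h1)).mul
    (hb2.cpow continuousAt_const (Or.inl h2))

end Final

end AbelLegendre

theorem abel_sum_legendre_cos_zero (β φ : ℝ) (hφ : 0 < φ) (hφβ : φ < β) (hβ : β < π) :
    Tendsto
      (fun r : ℝ =>
        ∑' n : ℕ, r ^ n * Real.cos (((n : ℝ) + 1 / 2) * β) * legendreP n (Real.cos φ))
      (nhdsWithin 1 (Set.Iio 1)) (nhds 0) := by
  classical
  set x : ℝ := Real.cos φ with hxdef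
  have hπ : 0 < π := Real.pi_pos
  have hβ0 : 0 < β := lt_trans hφ hφβ
  have hφπ : φ < π := lt_trans hφβ hβ
  have hx : |x| ≤ 1 := Real.abs_cos_le_one φ
  set e : ℂ := Complex.exp ((φ : ℂ) * Complex.I) with hedef
  set eβ : ℂ := Complex.exp ((β : ℂ) * Complex.I) with heβdef
  set c : ℂ := Complex.exp (((β / 2 : ℝ) : ℂ) * Complex.I) with hcdef
  have he : ‖e‖ = 1 := AbelLegendre.exp_I_norm φ
  have heβ : ‖eβ‖ = 1 := AbelLegendre.exp_I_norm β
  have hee : e + e⁻¹ = 2 * (x : ℂ) := AbelLegendre.exp_I_add_inv φ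
  have heeβ : eβ + eβ⁻¹ = 2 * ((Real.cos β : ℝ) : ℂ) := AbelLegendre.exp_I_add_inv β
  -- the limit function
  set Φ : ℝ → ℝ := fun r => (c * AbelLegendre.Ffun e ((r : ℂ) * eβ)).re with hΦdef
  -- Step A : the partial sums equal Φ for |r| < 1
  have stepA : ∀ r : ℝ, |r| < 1 →
      (∑' n : ℕ, r ^ n * Real.cos (((n : ℝ) + 1 / 2) * β) * legendreP n x) = Φ r := by
    intro r hr
    have hzn : ‖(r : ℂ) * eβ‖ < 1 := by
      rw [norm_mul, heβ, mul_one, Complex.norm_real]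
      exact hr
    have hsum := (AbelLegendre.main_sum x e hx he hee hzn).mul_left c
    have hre := Complex.reCLM.hasSum hsum
    have hterm : ∀ n : ℕ,
        Complex.reCLM (c * (AbelLegendre.gseq x n * ((r : ℂ) * eβ) ^ n)) =
          r ^ n * Real.cos (((n : ℝ) + 1 / 2) * β) * legendreP n x := by
      intro n
      have hexp : c * eβ ^ n = Complex.exp (((((n : ℝ) + 1 / 2) * β : ℝ) : ℂ) * Complex.I) := by
        rw [heβdef, ← Complex.exp_nat_mul, hcdef, ← Complex.exp_add]
        congr 1
        push_cast
        ring
      have : c * (AbelLegendre.gseq x n * ((r : ℂ) * eβ) ^ n) =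
          ((legendreP n x * r ^ n : ℝ) : ℂ) *
            Complex.exp (((((n : ℝ) + 1 / 2) * β : ℝ) : ℂ) * Complex.I) := by
        rw [mul_pow, ← hexp, AbelLegendre.gseq]
        push_cast
        ring
      rw [Complex.reCLM_apply, this, Complex.re_ofReal_mul, Complex.exp_ofReal_mul_I_re]
      ring
    rw [hΦdef]
    have := ((funext hterm : _) ▸ hre).tsum_eq
    simpa using this
  -- Step B : continuity of Φ at 1
  have hre1 : 0 < (1 - eβ * e).re := by
    have : eβ * e = Complex.exp (((β + φ : ℝ) : ℂ) * Complex.I) := AbelLegendre.exp_I_mul β φ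
    rw [this]
    exact AbelLegendre.one_sub_exp_re_pos (by linarith) (by linarith)
  have hre2 : 0 < (1 - eβ * e⁻¹).re := by
    have h1 : eβ * e⁻¹ = Complex.exp (((β - φ : ℝ) : ℂ) * Complex.I) := by
      rw [AbelLegendre.exp_I_inv, AbelLegendre.exp_I_mul]
      ring_nf
    rw [h1]
    exact AbelLegendre.one_sub_exp_re_pos (by linarith) (by linarith)
  have hcontΦ : ContinuousAt Φ 1 := by
    have h1 : ContinuousAt (fun r : ℝ => c * AbelLegendre.Ffun e ((r : ℂ) * eβ)) 1 := by
      apply ContinuousAt.mul continuousAt_const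
      apply ContinuousAt.comp (x := (1 : ℝ)) (g := AbelLegendre.Ffun e)
        (f := fun r : ℝ => (r : ℂ) * eβ) ?_ (by fun_prop)
      show ContinuousAt (AbelLegendre.Ffun e) (((1 : ℝ) : ℂ) * eβ)
      rw [Complex.ofReal_one, one_mul]
      exact AbelLegendre.F_contAt' e hre1 hre2
    exact Complex.continuous_re.continuousAt.comp h1
  -- Step C : the limit value is 0
  have hval : Φ 1 = 0 := by
    set L : ℂ := c * AbelLegendre.Ffun e ((1 : ℝ) * eβ) with hLdef
    have hone : ((1 : ℝ) : ℂ) * eβ = eβ := by rw [Complex.ofReal_one, one_mul]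
    have hQfac : AbelLegendre.Qp x eβ = (1 - eβ * e) * (1 - eβ * e⁻¹) :=
      AbelLegendre.Qfactor x e he hee eβ
    have hne1 : (1 - eβ * e) ≠ 0 := AbelLegendre.ne_zero_of_re_pos hre1
    have hne2 : (1 - eβ * e⁻¹) ≠ 0 := AbelLegendre.ne_zero_of_re_pos hre2
    have hFsq : (AbelLegendre.Ffun e eβ) ^ 2 = ((1 - eβ * e) * (1 - eβ * e⁻¹))⁻¹ :=
      AbelLegendre.Fsq e hne1 hne2
    have heβne : eβ ≠ 0 := Complex.exp_ne_zero _
    have hQval : AbelLegendre.Qp x eβ = eβ * (2 * ((Real.cos β : ℝ) : ℂ) - 2 * (x : ℂ)) := by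
      have h1 : eβ * eβ⁻¹ = 1 := mul_inv_cancel₀ heβne
      rw [AbelLegendre.Qp]
      linear_combination eβ * heeβ - h1
    have hc2 : c * c = eβ := by
      rw [hcdef, heβdef, ← Complex.exp_add]
      congr 1
      push_cast
      ring
    set d : ℝ := 2 * (Real.cos β - Real.cos φ) with hddef
    have hdneg : d < 0 := by
      have := Real.cos_lt_cos_of_nonneg_of_le_pi (le_of_lt hφ) (le_of_lt hβ) hφβ
      rw [hddef]
      linarith
    have hdne : (d : ℂ) ≠ 0 := by
      exact_mod_cast (Complex.ofReal_ne_zero.mpr (ne_of_lt hdneg))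
    have hL2 : L ^ 2 = ((d : ℝ) : ℂ)⁻¹ := by
      rw [hLdef, hone]
      have expand : (c * AbelLegendre.Ffun e eβ) ^ 2 = (c * c) * (AbelLegendre.Ffun e eβ) ^ 2 := by
        ring
      rw [expand, hc2, hFsq, ← hQfac, hQval]
      rw [mul_inv]
      rw [← mul_assoc, mul_inv_cancel₀ heβne, one_mul]
      congr 1
      rw [hddef, hxdef]
      push_cast
      ring
    have him : L.re * L.im = 0 := by
      have h1 : (L ^ 2).im = 0 := by
        rw [hL2]
        simp [Complex.inv_im, Complex.ofReal_im]
      rw [sq, Complex.mul_im] at h1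
      linarith
    have hre' : L.re ^ 2 - L.im ^ 2 < 0 := by
      have h1 : (L ^ 2).re = d⁻¹ := by
        rw [hL2, ← Complex.ofReal_inv, Complex.ofReal_re]
      have h2 : d⁻¹ < 0 := inv_lt_zero.mpr hdneg
      rw [sq, Complex.mul_re] at h1
      nlinarith
    have hre0 : L.re = 0 := by
      rcases mul_eq_zero.mp him with h | h
      · exact h
      · exfalso
        rw [h] at hre'
        nlinarith
    rw [hΦdef]
    exact hre0
  -- Step D : conclude
  have hev : (fun r : ℝ =>
      ∑' n : ℕ, r ^ n * Real.cos (((n : ℝ) + 1 / 2) * β) * legendreP n x) =ᶠ[nhdsWithin 1 (Set.Iio 1)] Φ := by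
    have h1 : ∀ᶠ r in nhdsWithin (1:ℝ) (Set.Iio 1), r < 1 := eventually_mem_nhdsWithin
    have h2 : ∀ᶠ r in nhdsWithin (1:ℝ) (Set.Iio 1), (-1:ℝ) < r :=
      (eventually_gt_nhds (by norm_num : (-1:ℝ) < 1)).filter_mono nhdsWithin_le_nhds
    filter_upwards [h1, h2] with r hr1 hr2
    exact stepA r (abs_lt.mpr ⟨hr2, hr1⟩)
  have hlim : Tendsto Φ (nhdsWithin 1 (Set.Iio 1)) (nhds 0) := by
    rw [← hval]
    exact (hcontΦ.tendsto).mono_left nhdsWithin_le_nhds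
  exact hlim.congr' hev.symm
end

section
/- The improper integral ∫_0^∞ sin((π/2) t²) dt converges (as the limit of ∫_0^x as x → ∞) and equals 1/2. -/
open Filter Real MeasureTheory

lemma hasDeriv_u {c ε : ℝ} (hc : 0 < c) {t : ℝ} (ht : 0 < t) :
    HasDerivAt (fun s => Real.exp (-(ε * s^2)) / (2*c*s))
      (-(Real.exp (-(ε * t^2)) * (ε/c + 1/(2*c*t^2)))) t := by
  have hf : HasDerivAt (fun s : ℝ => Real.exp (-(ε * s^2))) (Real.exp (-(ε * t^2)) * (-(ε * (2*t)))) t := by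
    have h1 : HasDerivAt (fun s : ℝ => -(ε * s^2)) (-(ε * (2*t))) t := by
      have := ((hasDerivAt_pow 2 t).const_mul ε).neg
      simpa [Pi.neg_def] using this
    exact h1.exp
  have hg : HasDerivAt (fun s : ℝ => 2*c*s) (2*c) t := by
    simpa using (hasDerivAt_id t).const_mul (2*c)
  have hne : 2*c*t ≠ 0 := by positivity
  have := hf.div hg hne
  refine this.congr_deriv ?_
  field_simp
  ring

lemma hasDeriv_v {c : ℝ} (t : ℝ) :
    HasDerivAt (fun s => -Real.cos (c * s^2)) (2*c*t * Real.sin (c * t^2)) t := by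
  have h1 : HasDerivAt (fun s : ℝ => c * s^2) (c * (2*t)) t := by
    simpa using (hasDerivAt_pow 2 t).const_mul c
  have := h1.cos.neg
  refine this.congr_deriv ?_
  ring

lemma integral_inv_sq_bound {A x : ℝ} (hA : 0 < A) (hx : A ≤ x) :
    ∫ t in A..x, (t^2)⁻¹ = A⁻¹ - x⁻¹ := by
  have h : ∀ t ∈ Set.uIcc A x, HasDerivAt (fun s : ℝ => -s⁻¹) ((t^2)⁻¹) t := by
    intro t ht
    rw [Set.uIcc_of_le hx] at ht
    have htpos : 0 < t := lt_of_lt_of_le hA ht.1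
    have := (hasDerivAt_inv htpos.ne').neg
    refine this.congr_deriv ?_
    field_simp
  rw [intervalIntegral.integral_eq_sub_of_hasDerivAt h]
  · ring
  · apply ContinuousOn.intervalIntegrable
    intro t ht
    rw [Set.uIcc_of_le hx] at ht
    have htpos : 0 < t := lt_of_lt_of_le hA ht.1
    exact (continuousAt_inv₀ (by positivity)).comp ((continuous_pow 2).continuousAt) |>.continuousWithinAt

lemma integral_exp_lin_bound {b A x : ℝ} (hb : 0 < b) (hx : A ≤ x) :
    ∫ t in A..x, Real.exp (-(b*t)) = (Real.exp (-(b*A)) - Real.exp (-(b*x))) / b := by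
  have h : ∀ t ∈ Set.uIcc A x, HasDerivAt (fun s : ℝ => -Real.exp (-(b*s)) / b) (Real.exp (-(b*t))) t := by
    intro t _
    have h1 : HasDerivAt (fun s : ℝ => -(b*s)) (-b) t := by
      simpa [Pi.neg_def] using ((hasDerivAt_id t).const_mul b).neg
    have := ((h1.exp).neg).div_const b
    refine this.congr_deriv ?_
    field_simp
  rw [intervalIntegral.integral_eq_sub_of_hasDerivAt h]
  · ring
  · exact (Real.continuous_exp.comp (by continuity)).continuousOn.intervalIntegrable


lemma key_bound {c ε A x : ℝ} (hc : 0 < c) (hε : 0 ≤ ε) (hA : 0 < A) (hx : A ≤ x) :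
    |∫ t in A..x, Real.sin (c * t^2) * Real.exp (-(ε * t^2))| ≤ 3 / (c * A) := by
  have huIcc : Set.uIcc A x = Set.Icc A x := Set.uIcc_of_le hx
  have hpos : ∀ t ∈ Set.uIcc A x, 0 < t := by
    intro t ht; rw [huIcc] at ht; exact lt_of_lt_of_le hA ht.1
  have hu : ∀ t ∈ Set.uIcc A x, HasDerivAt (fun s => Real.exp (-(ε * s^2)) / (2*c*s))
      (-(Real.exp (-(ε * t^2)) * (ε/c + 1/(2*c*t^2)))) t := fun t ht => hasDeriv_u hc (hpos t ht)
  have hv : ∀ t ∈ Set.uIcc A x, HasDerivAt (fun s => -Real.cos (c * s^2))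
      (2*c*t * Real.sin (c * t^2)) t := fun t _ => hasDeriv_v t
  have hu'cont : ContinuousOn (fun t : ℝ => -(Real.exp (-(ε * t^2)) * (ε/c + 1/(2*c*t^2)))) (Set.uIcc A x) := by
    intro t ht
    have htpos := hpos t ht
    have h2 : (2*c*t^2) ≠ 0 := by positivity
    have hexp : Continuous fun t : ℝ => Real.exp (-(ε * t^2)) := by fun_prop
    have hden : ContinuousAt (fun t : ℝ => 1/(2*c*t^2)) t :=
      ContinuousAt.div continuousAt_const (by fun_prop) h2
    exact ((hexp.continuousAt.mul (continuousAt_const.add hden)).neg).continuousWithinAt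
  have hu'int : IntervalIntegrable (fun t : ℝ => -(Real.exp (-(ε * t^2)) * (ε/c + 1/(2*c*t^2))))
      MeasureTheory.volume A x := hu'cont.intervalIntegrable
  have hv'int : IntervalIntegrable (fun t : ℝ => 2*c*t * Real.sin (c * t^2))
      MeasureTheory.volume A x := (by fun_prop : Continuous fun t : ℝ => 2*c*t * Real.sin (c * t^2)).continuousOn.intervalIntegrable
  have hibp := intervalIntegral.integral_mul_deriv_eq_deriv_mul hu hv hu'int hv'int
  have hcongr : ∫ t in A..x, Real.sin (c * t^2) * Real.exp (-(ε * t^2))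
      = ∫ t in A..x, (Real.exp (-(ε * t^2)) / (2*c*t)) * (2*c*t * Real.sin (c * t^2)) := by
    apply intervalIntegral.integral_congr
    intro t ht
    have htpos := hpos t ht
    have h2 : (2*c*t) ≠ 0 := by positivity
    field_simp
  rw [hcongr, hibp]
  have hbound : ∀ t : ℝ, 0 < t → t ∈ Set.uIcc A x →
      |Real.exp (-(ε * t^2)) / (2*c*t) * (-Real.cos (c * t^2))| ≤ 1/(2*c*A) := by
    intro t htpos ht
    rw [huIcc] at ht
    rw [abs_mul, abs_neg, abs_div, abs_of_pos (by positivity : (0:ℝ) < 2*c*t),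
      abs_of_pos (Real.exp_pos _)]
    have h1 : Real.exp (-(ε * t^2)) ≤ 1 := Real.exp_le_one_iff.2 (neg_nonpos_of_nonneg (by positivity))
    have h2 : |Real.cos (c * t^2)| ≤ 1 := Real.abs_cos_le_one _
    calc Real.exp (-(ε * t^2)) / (2*c*t) * |Real.cos (c * t^2)|
        ≤ 1 / (2*c*A) * 1 := by
          apply mul_le_mul _ h2 (abs_nonneg _) (by positivity)
          apply div_le_div₀ zero_le_one h1 (by positivity)
          have : A ≤ t := ht.1
          nlinarith
      _ = 1/(2*c*A) := by ring
  have hxmem : x ∈ Set.uIcc A x := Set.right_mem_uIcc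
  have hAmem : A ∈ Set.uIcc A x := Set.left_mem_uIcc
  have hb1 := hbound x (lt_of_lt_of_le hA hx) hxmem
  have hb2 := hbound A hA hAmem
  -- bound for the integral of u' * v
  have hgcont : ContinuousOn (fun t : ℝ => ε/c * Real.exp (-(ε*A*t)) + 1/(2*c) * (t^2)⁻¹)
      (Set.uIcc A x) := by
    intro t ht
    have htpos := hpos t ht
    have hexp : Continuous fun t : ℝ => ε/c * Real.exp (-(ε*A*t)) := by fun_prop
    have hden : ContinuousAt (fun t : ℝ => 1/(2*c) * (t^2)⁻¹) t :=
      continuousAt_const.mul ((continuousAt_inv₀ (by positivity)).comp (by fun_prop))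
    exact (hexp.continuousAt.add hden).continuousWithinAt
  have hgint : IntervalIntegrable (fun t : ℝ => ε/c * Real.exp (-(ε*A*t)) + 1/(2*c) * (t^2)⁻¹)
      MeasureTheory.volume A x := hgcont.intervalIntegrable
  have hb3 : |∫ t in A..x, (-(Real.exp (-(ε * t^2)) * (ε/c + 1/(2*c*t^2)))) * (-Real.cos (c * t^2))|
      ≤ 3/(2*c*A) := by
    have hae : ∀ᵐ t ∂(MeasureTheory.volume.restrict (Set.uIoc A x)),
        ‖(-(Real.exp (-(ε * t^2)) * (ε/c + 1/(2*c*t^2)))) * (-Real.cos (c * t^2))‖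
          ≤ ε/c * Real.exp (-(ε*A*t)) + 1/(2*c) * (t^2)⁻¹ := by
      rw [Set.uIoc_of_le hx]
      apply MeasureTheory.ae_restrict_of_forall_mem measurableSet_Ioc
      intro t ht
      have htpos : 0 < t := lt_trans hA ht.1
      have htA : A ≤ t := ht.1.le
      have hexp1 : Real.exp (-(ε * t^2)) ≤ Real.exp (-(ε*A*t)) :=
        Real.exp_le_exp.2 (by nlinarith [mul_nonneg (mul_nonneg hε htpos.le) (sub_nonneg.2 htA)])
      have hexp2 : Real.exp (-(ε * t^2)) ≤ 1 :=
        Real.exp_le_one_iff.2 (neg_nonpos_of_nonneg (by positivity))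
      rw [norm_mul, norm_neg, norm_neg, Real.norm_eq_abs, Real.norm_eq_abs,
        abs_of_nonneg (mul_nonneg (Real.exp_pos _).le
          (add_nonneg (div_nonneg hε hc.le) (by positivity)))]
      have hcos : |Real.cos (c * t^2)| ≤ 1 := Real.abs_cos_le_one _
      calc Real.exp (-(ε * t^2)) * (ε/c + 1/(2*c*t^2)) * |Real.cos (c * t^2)|
          ≤ Real.exp (-(ε * t^2)) * (ε/c + 1/(2*c*t^2)) * 1 :=
            mul_le_mul_of_nonneg_left hcos (mul_nonneg (Real.exp_pos _).le
              (add_nonneg (div_nonneg hε hc.le) (by positivity)))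
        _ = ε/c * Real.exp (-(ε * t^2)) + Real.exp (-(ε * t^2)) * (1/(2*c) * (t^2)⁻¹) := by
            field_simp
        _ ≤ ε/c * Real.exp (-(ε*A*t)) + 1 * (1/(2*c) * (t^2)⁻¹) := by
            apply add_le_add (mul_le_mul_of_nonneg_left hexp1 (div_nonneg hε hc.le))
            exact mul_le_mul_of_nonneg_right hexp2 (by positivity)
        _ = ε/c * Real.exp (-(ε*A*t)) + 1/(2*c) * (t^2)⁻¹ := by ring
    have hstep1 := intervalIntegral.norm_integral_le_abs_of_norm_le hae hgint
    rw [Real.norm_eq_abs] at hstep1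
    refine hstep1.trans ?_
    have hexpint : IntervalIntegrable (fun t : ℝ => Real.exp (-(ε*A*t))) MeasureTheory.volume A x :=
      (by fun_prop : Continuous fun t : ℝ => Real.exp (-(ε*A*t))).continuousOn.intervalIntegrable
    have hinvint : IntervalIntegrable (fun t : ℝ => (t^2)⁻¹) MeasureTheory.volume A x := by
      apply ContinuousOn.intervalIntegrable
      intro t ht
      have htpos := hpos t ht
      exact ((continuousAt_inv₀ (by positivity)).comp (by fun_prop)).continuousWithinAt
    rw [intervalIntegral.integral_add (hexpint.const_mul _) (hinvint.const_mul _),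
      intervalIntegral.integral_const_mul, intervalIntegral.integral_const_mul,
      integral_inv_sq_bound hA hx]
    have hxinv : (0:ℝ) ≤ x⁻¹ := inv_nonneg.2 ((hA.le).trans hx)
    have hterm2 : 1/(2*c) * (A⁻¹ - x⁻¹) ≤ 1/(2*c*A) := by
      have : 1/(2*c) * A⁻¹ = 1/(2*c*A) := by field_simp
      nlinarith [mul_le_mul_of_nonneg_left (sub_le_self A⁻¹ hxinv) (by positivity : (0:ℝ) ≤ 1/(2*c))]
    have hterm1 : ε/c * ∫ t in A..x, Real.exp (-(ε*A*t)) ≤ 1/(c*A) := by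
      rcases eq_or_lt_of_le hε with h0 | hεpos
      · simp [← h0]
        positivity
      · have hb : (0:ℝ) < ε*A := mul_pos hεpos hA
        have h4 : (∫ t in A..x, Real.exp (-(ε*A*t))) ≤ 1/(ε*A) := by
          rw [integral_exp_lin_bound hb hx]
          gcongr
          nlinarith [Real.exp_le_one_iff.2 (neg_nonpos_of_nonneg
            (mul_nonneg (mul_nonneg hε hA.le) hA.le)),
            Real.exp_pos (-(ε*A*x))]
        calc ε/c * ∫ t in A..x, Real.exp (-(ε*A*t)) ≤ ε/c * (1/(ε*A)) :=
              mul_le_mul_of_nonneg_left h4 (div_nonneg hε hc.le)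
          _ = 1/(c*A) := by
              rw [div_mul_div_comm, div_eq_div_iff (by positivity) (by positivity)]
              ring
    have heq : 1/(c*A) + 1/(2*c*A) = 3/(2*c*A) := by field_simp; ring
    have hintnonneg : 0 ≤ ∫ t in A..x, Real.exp (-(ε*A*t)) :=
      intervalIntegral.integral_nonneg hx (fun u _ => (Real.exp_pos _).le)
    have hAx : x⁻¹ ≤ A⁻¹ := inv_anti₀ hA hx
    rw [abs_of_nonneg (add_nonneg (mul_nonneg (div_nonneg hε hc.le) hintnonneg)
      (mul_nonneg (by positivity) (sub_nonneg.2 hAx)))]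
    linarith
  -- combine
  have htotal : 1/(2*c*A) + 1/(2*c*A) + 3/(2*c*A) ≤ 3/(c*A) := by
    rw [← add_div, ← add_div, div_le_div_iff₀ (by positivity) (by positivity)]
    nlinarith
  calc |Real.exp (-(ε * x^2)) / (2*c*x) * (-Real.cos (c * x^2))
        - Real.exp (-(ε * A^2)) / (2*c*A) * (-Real.cos (c * A^2))
        - ∫ t in A..x, (-(Real.exp (-(ε * t^2)) * (ε/c + 1/(2*c*t^2)))) * (-Real.cos (c * t^2))|
      ≤ 1/(2*c*A) + 1/(2*c*A) + 3/(2*c*A) := by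
        have h5 := abs_sub (Real.exp (-(ε * x^2)) / (2*c*x) * (-Real.cos (c * x^2))
          - Real.exp (-(ε * A^2)) / (2*c*A) * (-Real.cos (c * A^2)))
          (∫ t in A..x, (-(Real.exp (-(ε * t^2)) * (ε/c + 1/(2*c*t^2)))) * (-Real.cos (c * t^2)))
        have h6 := abs_sub (Real.exp (-(ε * x^2)) / (2*c*x) * (-Real.cos (c * x^2)))
          (Real.exp (-(ε * A^2)) / (2*c*A) * (-Real.cos (c * A^2)))
        linarith
    _ ≤ 3/(c*A) := htotal

lemma cpow_neg_two_I : ((-2)*Complex.I : ℂ)^((1:ℂ)/2) = 1 - Complex.I := by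
  have hne : ((-2)*Complex.I : ℂ) ≠ 0 := by
    simp [Complex.ext_iff]
  rw [Complex.cpow_def_of_ne_zero hne]
  have harg : Complex.arg ((-2)*Complex.I) = -(π/2) := by
    rw [show ((-2)*Complex.I : ℂ) = (2:ℝ) * (-Complex.I) by push_cast; ring,
      Complex.arg_real_mul _ (by norm_num : (0:ℝ) < 2), Complex.arg_neg_I]
  have habs : ‖((-2)*Complex.I : ℂ)‖ = 2 := by
    simp
  have hlog : Complex.log ((-2)*Complex.I) = (Real.log 2 : ℂ) - (π/2)*Complex.I := by
    apply Complex.ext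
    · rw [Complex.log_re, habs]
      simp [Complex.log_re]
    · rw [Complex.log_im, harg]
      simp [Complex.log_im, Complex.arg_ofReal_of_nonneg]
  rw [hlog]
  have : ((Real.log 2 : ℂ) - (π/2)*Complex.I) * (1/2) = ((Real.log 2 / 2 : ℝ) : ℂ) + (-(π/4) : ℝ) * Complex.I := by
    push_cast; ring
  rw [this, Complex.exp_add, Complex.exp_mul_I, ← Complex.ofReal_exp]
  have hexp : Real.exp (Real.log 2 / 2) = Real.sqrt 2 := by
    rw [← Real.log_sqrt (by norm_num : (0:ℝ) ≤ 2), Real.exp_log (Real.sqrt_pos.2 (by norm_num))]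
  rw [hexp]
  have hcos : Complex.cos (-(π/4) : ℝ) = ((Real.sqrt 2 / 2 : ℝ) : ℂ) := by
    rw [← Complex.ofReal_cos]
    norm_cast
    rw [Real.cos_neg, Real.cos_pi_div_four]
  have hsin : Complex.sin (-(π/4) : ℝ) = (-(Real.sqrt 2 / 2) : ℝ) := by
    rw [← Complex.ofReal_sin]
    norm_cast
    rw [Real.sin_neg, Real.sin_pi_div_four]
  rw [hcos, hsin]
  have h2 : Real.sqrt 2 * Real.sqrt 2 = 2 := Real.mul_self_sqrt (by norm_num)
  apply Complex.ext <;> push_cast <;> simp <;> nlinarith [h2]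

lemma integrableOn_sin_exp {ε : ℝ} (hε : 0 < ε) :
    MeasureTheory.IntegrableOn (fun t : ℝ => Real.sin (π/2 * t^2) * Real.exp (-(ε * t^2)))
      (Set.Ioi 0) := by
  apply MeasureTheory.Integrable.integrableOn
  apply MeasureTheory.Integrable.mono (integrable_exp_neg_mul_sq hε)
  · exact ((by fun_prop : Continuous fun t : ℝ => Real.sin (π/2 * t^2) * Real.exp (-(ε * t^2)))).aestronglyMeasurable
  · filter_upwards with t
    rw [Real.norm_eq_abs, Real.norm_eq_abs, abs_mul, abs_of_pos (Real.exp_pos _),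
      abs_of_pos (Real.exp_pos _), neg_mul]
    exact mul_le_of_le_one_left (Real.exp_pos _).le (abs_sin_le_one _)

lemma I_eq {ε : ℝ} (hε : 0 < ε) :
    ∫ t in Set.Ioi (0:ℝ), Real.sin (π/2 * t^2) * Real.exp (-(ε * t^2))
      = -((((π:ℂ))/(ε + (π/2)*Complex.I))^((1:ℂ)/2)).im / 2 := by
  set b : ℂ := ε + (π/2)*Complex.I with hb_def
  have hb : 0 < b.re := by simp [hb_def, hε]
  have h1 := integral_gaussian_complex_Ioi hb
  have hint : MeasureTheory.IntegrableOn (fun x : ℝ => Complex.exp (-b * x^2)) (Set.Ioi 0) :=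
    (integrable_cexp_neg_mul_sq hb).integrableOn
  have h2 : ∫ t in Set.Ioi (0:ℝ), (Complex.exp (-b * t^2)).im
      = ((((π:ℂ))/b)^((1:ℂ)/2) / 2).im := by
    rw [← h1]
    exact integral_im hint
  have h3 : ∀ t : ℝ, (Complex.exp (-b * (t:ℂ)^2)).im
      = -(Real.sin (π/2 * t^2) * Real.exp (-(ε * t^2))) := by
    intro t
    rw [Complex.exp_im]
    have hre : (-b * (t:ℂ)^2).re = -(ε * t^2) := by
      simp [hb_def, ← Complex.ofReal_pow]
    have him : (-b * (t:ℂ)^2).im = -(π/2 * t^2) := by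
      simp [hb_def, ← Complex.ofReal_pow]
    rw [hre, him, Real.sin_neg]
    ring
  rw [show ((((π:ℂ))/b)^((1:ℂ)/2) / 2).im = ((((π:ℂ))/b)^((1:ℂ)/2)).im / 2 by
    simp [Complex.div_im]] at h2
  simp_rw [h3] at h2
  rw [MeasureTheory.integral_neg] at h2
  linarith

lemma lim_im : Filter.Tendsto
    (fun ε : ℝ => -((((π:ℂ))/(ε + (π/2)*Complex.I))^((1:ℂ)/2)).im / 2)
    (nhdsWithin 0 (Set.Ioi 0)) (nhds (1/2)) := by
  have hπ : (π:ℂ) ≠ 0 := by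
    exact_mod_cast Real.pi_ne_zero
  have hden0 : (((0:ℝ):ℂ) + (π/2)*Complex.I) ≠ 0 := by
    simp [Complex.ext_iff, Real.pi_ne_zero]
  have hval : ((π:ℂ))/(((0:ℝ):ℂ) + (π/2)*Complex.I) = (-2)*Complex.I := by
    rw [div_eq_iff hden0]
    have : Complex.I * Complex.I = -1 := Complex.I_mul_I
    push_cast
    ring_nf
    rw [Complex.I_sq]
    ring
  have hg : ContinuousAt (fun ε : ℝ => ((π:ℂ))/((ε:ℂ) + (π/2)*Complex.I)) 0 := by
    apply ContinuousAt.div continuousAt_const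
    · fun_prop
    · exact hden0
  have hslit : ((π:ℂ))/(((0:ℝ):ℂ) + (π/2)*Complex.I) ∈ Complex.slitPlane := by
    rw [hval, Complex.mem_slitPlane_iff]
    right
    simp
  have hcpow : ContinuousAt (fun ε : ℝ => (((π:ℂ))/((ε:ℂ) + (π/2)*Complex.I))^((1:ℂ)/2)) 0 :=
    ContinuousAt.cpow hg continuousAt_const hslit
  have hfull : ContinuousAt (fun ε : ℝ => -((((π:ℂ))/((ε:ℂ) + (π/2)*Complex.I))^((1:ℂ)/2)).im / 2) 0 :=
    (((Complex.continuous_im.continuousAt.comp hcpow).neg).div_const 2)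
  have hvalue : -((((π:ℂ))/(((0:ℝ):ℂ) + (π/2)*Complex.I))^((1:ℂ)/2)).im / 2 = 1/2 := by
    rw [hval, cpow_neg_two_I]
    simp
  have := hfull.tendsto
  rw [hvalue] at this
  exact this.mono_left nhdsWithin_le_nhds


theorem fresnel_sine_integral :
    Tendsto (fun x : ℝ => ∫ t in (0:ℝ)..x, Real.sin (π / 2 * t ^ 2))
      atTop (nhds (1 / 2)) := by
  have hc : (0:ℝ) < π/2 := by positivity
  have hcont_sin : Continuous fun t : ℝ => Real.sin (π/2 * t^2) := by fun_prop
  have hcont_se : ∀ ε : ℝ, Continuous fun t : ℝ => Real.sin (π/2 * t^2) * Real.exp (-(ε * t^2)) := by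
    intro ε; fun_prop
  -- key bound with ε = 0
  have step0 : ∀ A x : ℝ, 0 < A → A ≤ x →
      |∫ t in A..x, Real.sin (π/2 * t^2)| ≤ 3 / ((π/2) * A) := by
    intro A x hA hx
    have := key_bound (ε := 0) hc le_rfl hA hx
    simpa using this
  -- Step A : |F A - 1/2| ≤ 3/(c A)
  have stepA : ∀ A : ℝ, 0 < A →
      |(∫ t in (0:ℝ)..A, Real.sin (π/2 * t^2)) - 1/2| ≤ 3 / ((π/2) * A) := by
    intro A hA
    -- finite-part limit
    have hdiff : ∀ᶠ ε in nhdsWithin (0:ℝ) (Set.Ioi 0),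
        ‖(∫ t in (0:ℝ)..A, Real.sin (π/2 * t^2) * Real.exp (-(ε * t^2)))
          - ∫ t in (0:ℝ)..A, Real.sin (π/2 * t^2)‖ ≤ ε * (A^2 * A) := by
      filter_upwards [self_mem_nhdsWithin] with ε (hε : (0:ℝ) < ε)
      rw [← intervalIntegral.integral_sub ((hcont_se ε).intervalIntegrable 0 A)
        (hcont_sin.intervalIntegrable 0 A)]
      have hb := intervalIntegral.norm_integral_le_of_norm_le_const
        (C := ε * A^2) (a := (0:ℝ)) (b := A)
        (f := fun t => Real.sin (π/2 * t^2) * Real.exp (-(ε * t^2)) - Real.sin (π/2 * t^2))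
        ?_
      · rcases le_or_gt 0 A with h0A | h0A
        · calc ‖_‖ ≤ ε * A^2 * |A - 0| := hb
            _ ≤ ε * (A^2 * A) := by rw [sub_zero, abs_of_nonneg h0A]; ring_nf; exact le_rfl
        · exact absurd h0A (not_lt.2 hA.le)
      · intro t ht
        rw [Set.uIoc_of_le hA.le] at ht
        have ht0 : 0 < t := ht.1
        have htA : t ≤ A := ht.2
        show ‖Real.sin (π/2 * t^2) * Real.exp (-(ε * t^2)) - Real.sin (π/2 * t^2)‖ ≤ ε * A^2
        have h1 : Real.sin (π/2 * t^2) * Real.exp (-(ε * t^2)) - Real.sin (π/2 * t^2)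
            = Real.sin (π/2 * t^2) * (Real.exp (-(ε * t^2)) - 1) := by ring
        rw [h1, norm_mul, Real.norm_eq_abs, Real.norm_eq_abs]
        have h2 : |Real.sin (π/2 * t^2)| ≤ 1 := Real.abs_sin_le_one _
        have h3 : |Real.exp (-(ε * t^2)) - 1| ≤ ε * t^2 := by
          rw [abs_of_nonpos (by
            have := Real.exp_le_one_iff.2 (neg_nonpos_of_nonneg
              (mul_nonneg hε.le (sq_nonneg t)))
            linarith)]
          have h4 := Real.add_one_le_exp (-(ε * t^2))
          linarith
        calc |Real.sin (π/2 * t^2)| * |Real.exp (-(ε * t^2)) - 1|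
            ≤ 1 * (ε * t^2) := mul_le_mul h2 h3 (abs_nonneg _) zero_le_one
          _ = ε * t^2 := by ring
          _ ≤ ε * A^2 := mul_le_mul_of_nonneg_left (pow_le_pow_left₀ ht0.le htA 2) hε.le
    have hzero : Tendsto (fun ε : ℝ => ε * (A^2 * A)) (nhdsWithin (0:ℝ) (Set.Ioi 0)) (nhds 0) := by
      have : Tendsto (fun ε : ℝ => ε * (A^2 * A)) (nhds 0) (nhds 0) := by
        have := (continuous_id.mul (continuous_const (y := A^2 * A))).tendsto 0
        simpa [Pi.mul_def] using this
      exact this.mono_left nhdsWithin_le_nhds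
    have h5' := squeeze_zero_norm' hdiff hzero
    have h5 : Tendsto (fun ε : ℝ => ∫ t in (0:ℝ)..A, Real.sin (π/2 * t^2) * Real.exp (-(ε * t^2)))
        (nhdsWithin (0:ℝ) (Set.Ioi 0)) (nhds (∫ t in (0:ℝ)..A, Real.sin (π/2 * t^2))) := by
      have := h5'.add_const (∫ t in (0:ℝ)..A, Real.sin (π/2 * t^2))
      rw [zero_add] at this
      refine this.congr fun ε => by ring
    -- full-integral limit
    have hIlim : Tendsto (fun ε : ℝ => ∫ t in Set.Ioi (0:ℝ), Real.sin (π/2 * t^2) * Real.exp (-(ε * t^2)))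
        (nhdsWithin (0:ℝ) (Set.Ioi 0)) (nhds (1/2)) := by
      apply Filter.Tendsto.congr' _ lim_im
      filter_upwards [self_mem_nhdsWithin] with ε (hε : (0:ℝ) < ε)
      exact (I_eq hε).symm
    -- split and tail bound
    have hsplit : ∀ ε : ℝ, 0 < ε →
        (∫ t in Set.Ioi (0:ℝ), Real.sin (π/2 * t^2) * Real.exp (-(ε * t^2)))
          = (∫ t in (0:ℝ)..A, Real.sin (π/2 * t^2) * Real.exp (-(ε * t^2)))
            + ∫ t in Set.Ioi A, Real.sin (π/2 * t^2) * Real.exp (-(ε * t^2)) := by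
      intro ε hε
      have hf := integrableOn_sin_exp hε
      rw [intervalIntegral.integral_of_le hA.le, ← MeasureTheory.setIntegral_union
        (Set.Ioc_disjoint_Ioi le_rfl) measurableSet_Ioi
        (hf.mono_set Set.Ioc_subset_Ioi_self) (hf.mono_set (fun y hy => lt_trans hA hy)),
        Set.Ioc_union_Ioi_eq_Ioi hA.le]
    have htailb : ∀ ε : ℝ, 0 < ε →
        |∫ t in Set.Ioi A, Real.sin (π/2 * t^2) * Real.exp (-(ε * t^2))| ≤ 3 / ((π/2) * A) := by
      intro ε hε
      have hint : MeasureTheory.IntegrableOn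
          (fun t : ℝ => Real.sin (π/2 * t^2) * Real.exp (-(ε * t^2))) (Set.Ioi A) :=
        (integrableOn_sin_exp hε).mono_set (fun y hy => lt_trans hA hy)
      have htt := MeasureTheory.intervalIntegral_tendsto_integral_Ioi A hint tendsto_id
      apply le_of_tendsto htt.abs
      filter_upwards [Filter.eventually_ge_atTop A] with x hx
      exact key_bound hc hε.le hA hx
    -- conclude
    have hG : Tendsto (fun ε : ℝ =>
        |(∫ t in (0:ℝ)..A, Real.sin (π/2 * t^2) * Real.exp (-(ε * t^2)))
          - ∫ t in Set.Ioi (0:ℝ), Real.sin (π/2 * t^2) * Real.exp (-(ε * t^2))|)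
        (nhdsWithin (0:ℝ) (Set.Ioi 0))
        (nhds |(∫ t in (0:ℝ)..A, Real.sin (π/2 * t^2)) - 1/2|) := (h5.sub hIlim).abs
    apply le_of_tendsto hG
    filter_upwards [self_mem_nhdsWithin] with ε (hε : (0:ℝ) < ε)
    rw [hsplit ε hε]
    rw [show (∫ t in (0:ℝ)..A, Real.sin (π/2 * t^2) * Real.exp (-(ε * t^2)))
        - ((∫ t in (0:ℝ)..A, Real.sin (π/2 * t^2) * Real.exp (-(ε * t^2)))
          + ∫ t in Set.Ioi A, Real.sin (π/2 * t^2) * Real.exp (-(ε * t^2)))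
        = -(∫ t in Set.Ioi A, Real.sin (π/2 * t^2) * Real.exp (-(ε * t^2))) by ring, abs_neg]
    exact htailb ε hε
  -- Step B and conclusion
  rw [Metric.tendsto_atTop]
  intro δ hδ
  refine ⟨max 1 (7/((π/2)*δ)), fun x hx => ?_⟩
  set A : ℝ := max 1 (7/((π/2)*δ)) with hA_def
  have hA1 : (1:ℝ) ≤ A := le_max_left _ _
  have hA : (0:ℝ) < A := lt_of_lt_of_le one_pos hA1
  have hAx : A ≤ x := hx
  have hsum : (∫ t in (0:ℝ)..A, Real.sin (π/2 * t^2)) + (∫ t in A..x, Real.sin (π/2 * t^2))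
      = ∫ t in (0:ℝ)..x, Real.sin (π/2 * t^2) :=
    intervalIntegral.integral_add_adjacent_intervals
      (hcont_sin.intervalIntegrable 0 A) (hcont_sin.intervalIntegrable A x)
  have h1 := stepA A hA
  have h2 := step0 A x hA hAx
  have h3 : |(∫ t in (0:ℝ)..x, Real.sin (π/2 * t^2)) - 1/2| ≤ 6 / ((π/2) * A) := by
    rw [← hsum]
    have := abs_add_le ((∫ t in (0:ℝ)..A, Real.sin (π/2 * t^2)) - 1/2)
      (∫ t in A..x, Real.sin (π/2 * t^2))
    have heq : (∫ t in (0:ℝ)..A, Real.sin (π/2 * t^2)) - 1/2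
        + (∫ t in A..x, Real.sin (π/2 * t^2))
        = (∫ t in (0:ℝ)..A, Real.sin (π/2 * t^2)) + (∫ t in A..x, Real.sin (π/2 * t^2)) - 1/2 := by
      ring
    rw [heq] at this
    have h6 : 3 / ((π/2) * A) + 3 / ((π/2) * A) = 6 / ((π/2) * A) := by ring
    linarith
  have h7 : 7/((π/2)*δ) ≤ A := le_max_right _ _
  have h8 : 7/δ ≤ (π/2) * A := by
    have := mul_le_mul_of_nonneg_left h7 hc.le
    calc 7/δ = (π/2) * (7/((π/2)*δ)) := by field_simp
      _ ≤ (π/2) * A := this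
  have h9 : 6 / ((π/2) * A) < δ := by
    have h10 : (0:ℝ) < 7/δ := by positivity
    have h11 : 6 / ((π/2) * A) ≤ 6 / (7/δ) := by gcongr
    have h12 : 6 / (7/δ) = 6*δ/7 := by field_simp
    linarith
  rw [Real.dist_eq]
  exact lt_of_le_of_lt h3 h9
end
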